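/- arXiv:1904.08733 — 2 statements merged into one kernel-verified Lean document; each statement's English description precedes it below -/
import Mathlib

section
/- Let (U_n) be a nested sequence of measurable subsets of Ω with μ(U_n) > 0 for all n and μ(U_n) → 0. Assume that for all sufficiently large integers L the limits α̂_ℓ(L) = lim_{n→∞} μ_{U_n}(τ_{U_n}^{ℓ-1} ≤ L) exist for every ℓ ≥ 1, set α̂_ℓ = lim_{L→∞} α̂_ℓ(L), and assume Σ_{ℓ=1}^∞ ℓ·α̂_ℓ < ∞. Define Z^{L,-}(x) = Σ_{i=0}^{L-1} 1_{U_n}(T^i x) and Z^{L,+}(x) = Σ_{i=L}^{2L} 1_{U_n}(T^i x). Then for every η > 0 there exists L₀ such that for every L ≥ L₀ there exists N such that for all n ≥ N, all integers ℓ ≥ 1, and all 0 ≤ k, k' < ℓ: |μ({Z^{L,-} = k} ∩ {Z^{L,+} = ℓ − k} ∩ T^{-L}U_n) − μ({Z^{L,-} = k'} ∩ {Z^{L,+} = ℓ − k'} ∩ T^{-L}U_n)| ≤ η·μ(U_n). -/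
open MeasureTheory Filter Topology
open scoped Classical ENNReal

/-- Number of visits of the orbit of `x` to `U` at times `1, …, j`. -/
noncomputable def visits {Ω : Type*} (T : Ω → Ω) (U : Set Ω) (x : Ω) (j : ℕ) : ℕ :=
  ((Finset.Icc 1 j).filter fun i => T^[i] x ∈ U).card

/-- The `ℓ`-th return time to `U` (with value `∞` if undefined, and `τ^0 = 0`). -/
noncomputable def tauIter {Ω : Type*} (T : Ω → Ω) (U : Set Ω) (ℓ : ℕ) (x : Ω) : ℕ∞ :=
  sInf ((fun j : ℕ => (j : ℕ∞)) '' {j : ℕ | ℓ ≤ visits T U x j})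

/-- The conditional probability `μ_U(A) = μ(A ∩ U)/μ(U)` as a real number. -/
noncomputable def condProb {Ω : Type*} [MeasurableSpace Ω] (μ : Measure Ω)
    (U A : Set Ω) : ℝ :=
  (μ (A ∩ U)).toReal / (μ U).toReal

/-- `Z^{L,-}(x) = Σ_{i=0}^{L-1} 1_U(T^i x)`. -/
noncomputable def Zminus {Ω : Type*} (T : Ω → Ω) (U : Set Ω) (L : ℕ) (x : Ω) : ℕ :=
  ((Finset.range L).filter fun i => T^[i] x ∈ U).card

/-- `Z^{L,+}(x) = Σ_{i=L}^{2L} 1_U(T^i x)`. -/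
noncomputable def Zplus {Ω : Type*} (T : Ω → Ω) (U : Set Ω) (L : ℕ) (x : Ω) : ℕ :=
  ((Finset.Icc L (2 * L)).filter fun i => T^[i] x ∈ U).card

/-!
Let `A_k = {Z^{L,-} = k, Z^{L,+} = ℓ - k, T^L x ∈ U}`. Cut `A_k` according to the gap `g` between
the visit at time `L` and the next visit, and `A_{k+1}` according to the gap `g` between the last
visit before `L` and the visit at `L`. Pulled back by the measure-preserving map `T^g`, a piece of
the second kind differs from the piece of the first kind with the same gap only through the two ends
of the observation window `[0, 2L]`. A point of the symmetric difference visits `U` at some time `v`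
(its first visit, its last visit before `g`, or `L`) after which the `m`-th return falls in
`(L, 2L]`, for one of four values of `m`; as `L - v` is a return time of `T^v x` of known order, `v`
is determined by `T^v x`, whence `|μ(A_k) - μ(A_{k+1})| ≤ Σ_m μ(U ∩ {L < τ^m ≤ 2L})`.
The hypotheses make `μ_U(L < τ^m ≤ 2L)` close to `α̂_{m+1}(2L) - α̂_{m+1}(L)`, hence small for
large `L`, and telescoping handles `ℓ ≤ ℓ₀`. For `ℓ > ℓ₀` both measures are at most
`μ(U ∩ {τ^{ℓ₀} ≤ 2L}) ≈ α̂_{ℓ₀+1} μ(U)`, which is small because `Σ ℓ α̂_ℓ < ∞`.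
-/

noncomputable def hitCount {Ω : Type*} (T : Ω → Ω) (U : Set Ω) (a b : ℕ) (x : Ω) : ℕ :=
  ((Finset.Ico a b).filter fun i => T^[i] x ∈ U).card

def consecutiveHits {Ω : Type*} (T : Ω → Ω) (U : Set Ω) (a b : ℕ) : Set Ω :=
  {x | T^[a] x ∈ U ∧ T^[b] x ∈ U ∧ hitCount T U (a + 1) b x = 0}

section HitCount

variable {Ω : Type*} {T : Ω → Ω} {U : Set Ω} {a b c : ℕ} {x : Ω}

lemma hitCount_add_hitCount (hab : a ≤ b) (hbc : b ≤ c) :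
    hitCount T U a b x + hitCount T U b c x = hitCount T U a c x := by
  simp only [hitCount, Finset.card_filter]
  exact Finset.sum_Ico_consecutive _ hab hbc

lemma hitCount_mono {a' b' : ℕ} (ha : a' ≤ a) (hb : b ≤ b') :
    hitCount T U a b x ≤ hitCount T U a' b' x :=
  Finset.card_le_card (Finset.filter_subset_filter _ (Finset.Ico_subset_Ico ha hb))

lemma hitCount_iterate (g : ℕ) :
    hitCount T U a b (T^[g] x) = hitCount T U (a + g) (b + g) x := by
  simp only [hitCount, Finset.card_filter, ← Function.iterate_add_apply]
  exact Finset.sum_Ico_add' (fun i => if T^[i] x ∈ U then 1 else 0) a b g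

lemma hitCount_self (a : ℕ) : hitCount T U a a x = 0 := by
  simp [hitCount]

lemma hitCount_self_add_one (h : T^[a] x ∈ U) : hitCount T U a (a + 1) x = 1 := by
  simp [hitCount, Nat.Ico_succ_singleton, Finset.filter_singleton, h]

lemma hitCount_pos_iff : 0 < hitCount T U a b x ↔ ∃ i, a ≤ i ∧ i < b ∧ T^[i] x ∈ U := by
  simp [hitCount, Finset.card_pos, Finset.filter_nonempty_iff, and_assoc]

lemma hitCount_pos_of_mem {i : ℕ} (hai : a ≤ i) (hib : i < b) (h : T^[i] x ∈ U) :
    0 < hitCount T U a b x :=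
  hitCount_pos_iff.2 ⟨i, hai, hib, h⟩

lemma exists_first_hit (h : 0 < hitCount T U a b x) :
    ∃ v, a ≤ v ∧ v < b ∧ T^[v] x ∈ U ∧ hitCount T U a v x = 0 := by
  have hex := hitCount_pos_iff.1 h
  refine ⟨Nat.find hex, (Nat.find_spec hex).1, (Nat.find_spec hex).2.1,
    (Nat.find_spec hex).2.2, Nat.eq_zero_of_not_pos fun hpos => ?_⟩
  obtain ⟨i, hai, hiv, hi⟩ := hitCount_pos_iff.1 hpos
  exact Nat.find_min hex hiv ⟨hai, hiv.trans (Nat.find_spec hex).2.1, hi⟩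

lemma exists_last_hit (h : 0 < hitCount T U a b x) :
    ∃ v, a ≤ v ∧ v < b ∧ T^[v] x ∈ U ∧ hitCount T U (v + 1) b x = 0 := by
  obtain ⟨i₀, hi₀⟩ := hitCount_pos_iff.1 h
  have hspec := Nat.findGreatest_spec (P := fun i => a ≤ i ∧ i < b ∧ T^[i] x ∈ U)
    hi₀.2.1.le hi₀
  refine ⟨_, hspec.1, hspec.2.1, hspec.2.2, Nat.eq_zero_of_not_pos fun hpos => ?_⟩
  obtain ⟨i, hvi, hib, hi⟩ := hitCount_pos_iff.1 hpos
  exact Nat.findGreatest_is_greatest (Nat.lt_of_succ_le hvi) hib.le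
    ⟨hspec.1.trans (by omega), hib, hi⟩

lemma preimage_iterate_consecutiveHits (g a b : ℕ) :
    T^[g] ⁻¹' consecutiveHits T U a b = consecutiveHits T U (a + g) (b + g) := by
  ext x
  simp only [consecutiveHits, Set.mem_preimage, Set.mem_ofPred_eq, ← Function.iterate_add_apply,
    hitCount_iterate, Nat.add_right_comm a 1 g, Nat.add_comm a g, Nat.add_comm b g]

lemma consecutiveHits_right_unique (hb : x ∈ consecutiveHits T U a b)
    (hc : x ∈ consecutiveHits T U a c) (hab : a < b) (hac : a < c) : b = c := by
  by_contra hne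
  rcases Nat.lt_or_gt_of_ne hne with h | h
  · exact (hitCount_pos_of_mem (by omega) h hb.2.1).ne' hc.2.2
  · exact (hitCount_pos_of_mem (by omega) h hc.2.1).ne' hb.2.2

lemma consecutiveHits_left_unique (ha : x ∈ consecutiveHits T U a c)
    (hb : x ∈ consecutiveHits T U b c) (hac : a < c) (hbc : b < c) : a = b := by
  by_contra hne
  rcases Nat.lt_or_gt_of_ne hne with h | h
  · exact (hitCount_pos_of_mem (by omega) hbc hb.1).ne' ha.2.2
  · exact (hitCount_pos_of_mem (by omega) hac ha.1).ne' hb.2.2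

lemma exists_consecutiveHits_right (ha : T^[a] x ∈ U) (h : 0 < hitCount T U (a + 1) b x) :
    ∃ c, a < c ∧ c < b ∧ x ∈ consecutiveHits T U a c := by
  obtain ⟨c, hac, hcb, hc, hzero⟩ := exists_first_hit h
  exact ⟨c, hac, hcb, ha, hc, hzero⟩

lemma exists_consecutiveHits_left (hb : T^[b] x ∈ U) (h : 0 < hitCount T U a b x) :
    ∃ c, a ≤ c ∧ c < b ∧ x ∈ consecutiveHits T U c b := by
  obtain ⟨c, hac, hcb, hc, hzero⟩ := exists_last_hit h
  exact ⟨c, hac, hcb, hc, hb, hzero⟩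

lemma hitCount_eq_of_mem_consecutiveHits {d : ℕ} (hx : x ∈ consecutiveHits T U a b)
    (hab : a < b) (hca : c ≤ a) (hbd : b ≤ d) :
    hitCount T U c d x = hitCount T U c a x + 1 + hitCount T U b d x := by
  rw [← hitCount_add_hitCount hca (hab.le.trans hbd),
    ← hitCount_add_hitCount (Nat.le_add_right a 1) (by omega), ← hitCount_add_hitCount hab hbd,
    hitCount_self_add_one hx.1, hx.2.2]
  ring

lemma hitCount_succ_eq_of_mem_consecutiveHits (hx : x ∈ consecutiveHits T U a b) (hab : a < b)
    (hbc : b ≤ c) : hitCount T U (a + 1) c x = hitCount T U b c x := by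
  rw [← hitCount_add_hitCount hab hbc, hx.2.2, Nat.zero_add]

lemma visits_eq_hitCount (j : ℕ) : visits T U x j = hitCount T U 1 (j + 1) x := by
  rw [visits, hitCount, Finset.Ico_add_one_right_eq_Icc]

lemma visits_mono {j t : ℕ} (hjt : j ≤ t) : visits T U x j ≤ visits T U x t := by
  simp only [visits_eq_hitCount]
  exact hitCount_mono le_rfl (by omega)

lemma visits_iterate_eq_hitCount (v j : ℕ) :
    visits T U (T^[v] x) j = hitCount T U (v + 1) (v + j + 1) x := by
  rw [visits_eq_hitCount, hitCount_iterate]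
  congr 1 <;> omega

lemma tauIter_le_iff {m t : ℕ} : tauIter T U m x ≤ t ↔ m ≤ visits T U x t := by
  refine ⟨fun h => ?_, fun h => sInf_le ⟨t, h, rfl⟩⟩
  by_contra! hlt
  have hgt : ((t + 1 : ℕ) : ℕ∞) ≤ tauIter T U m x := by
    refine le_sInf ?_
    rintro _ ⟨j, hj, rfl⟩
    by_contra! hjt
    have hjt' := ENat.natCast_lt_natCast.1 hjt
    exact absurd (hj.trans (visits_mono (by omega))) hlt.not_ge
  exact absurd (hgt.trans h) (by norm_cast; omega)

lemma Zminus_eq_hitCount (L : ℕ) : Zminus T U L x = hitCount T U 0 L x := by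
  rw [Zminus, hitCount, Finset.range_eq_Ico]

lemma Zplus_eq_hitCount (L : ℕ) : Zplus T U L x = hitCount T U L (2 * L + 1) x := by
  rw [Zplus, hitCount, Finset.Ico_add_one_right_eq_Icc]

end HitCount

section Measurability

variable {Ω : Type*} [MeasurableSpace Ω] {T : Ω → Ω} {U : Set Ω}

lemma measurable_hitCount (hT : Measurable T) (hU : MeasurableSet U) (a b : ℕ) :
    Measurable (hitCount T U a b) := by
  unfold hitCount
  simp only [Finset.card_filter]
  exact Finset.measurable_sum _ fun i _ =>
    Measurable.ite ((hT.iterate i) hU) measurable_const measurable_const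

lemma measurable_visits (hT : Measurable T) (hU : MeasurableSet U) (j : ℕ) :
    Measurable fun x => visits T U x j := by
  rw [show (fun x => visits T U x j) = hitCount T U 1 (j + 1) from
    funext fun x => visits_eq_hitCount j]
  exact measurable_hitCount hT hU _ _

lemma measurableSet_consecutiveHits (hT : Measurable T) (hU : MeasurableSet U) (a b : ℕ) :
    MeasurableSet (consecutiveHits T U a b) :=
  ((hT.iterate a) hU).inter <| ((hT.iterate b) hU).inter <|
    measurable_hitCount hT hU _ _ (measurableSet_singleton 0)

end Measurability

section MeasureSums

variable {Ω ι : Type*} [MeasurableSpace Ω] {μ : Measure Ω} {s : Finset ι}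

lemma measure_eq_sum_measure_inter {S : Set Ω} {P : ι → Set Ω} (hS : MeasurableSet S)
    (hP : ∀ i ∈ s, MeasurableSet (P i)) (hdisj : (s : Set ι).PairwiseDisjoint P)
    (hcover : S ⊆ ⋃ i ∈ s, P i) : μ S = ∑ i ∈ s, μ (S ∩ P i) := by
  rw [← measure_biUnion_finset (hdisj.mono fun i => Set.inter_subset_right)
    fun i hi => hS.inter (hP i hi), ← Set.inter_iUnion₂, Set.inter_eq_left.2 hcover]

lemma sum_measure_le_sum_measure_add {X Y : ι → Set Ω} {W : Set Ω}
    (hX : ∀ i ∈ s, MeasurableSet (X i)) (hY : ∀ i ∈ s, MeasurableSet (Y i))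
    (hdisj : (s : Set ι).PairwiseDisjoint X) (hW : ∀ i ∈ s, X i \ Y i ⊆ W) :
    ∑ i ∈ s, μ (X i) ≤ ∑ i ∈ s, μ (Y i) + μ W :=
  calc ∑ i ∈ s, μ (X i) ≤ ∑ i ∈ s, (μ (Y i) + μ (X i \ Y i)) :=
        Finset.sum_le_sum fun i _ =>
          (measure_mono (Set.sdiff_subset_iff.1 subset_rfl)).trans (measure_union_le _ _)
    _ = ∑ i ∈ s, μ (Y i) + μ (⋃ i ∈ s, X i \ Y i) := by
        rw [Finset.sum_add_distrib, measure_biUnion_finset (hdisj.mono fun i => Set.sdiff_subset)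
          fun i hi => (hX i hi).diff (hY i hi)]
    _ ≤ ∑ i ∈ s, μ (Y i) + μ W := by gcongr; exact Set.iUnion₂_subset hW

end MeasureSums

lemma ENNReal.abs_toReal_sub_le_add {a b c d : ℝ≥0∞} (hab : a ≤ b + c) (hba : b ≤ a + d)
    (ha : a ≠ ∞) (hb : b ≠ ∞) (hc : c ≠ ∞) (hd : d ≠ ∞) :
    |a.toReal - b.toReal| ≤ c.toReal + d.toReal := by
  have h₁ : a.toReal ≤ b.toReal + c.toReal := by
    rw [← ENNReal.toReal_add hb hc]
    exact ENNReal.toReal_mono (ENNReal.add_ne_top.2 ⟨hb, hc⟩) hab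
  have h₂ : b.toReal ≤ a.toReal + d.toReal := by
    rw [← ENNReal.toReal_add ha hd]
    exact ENNReal.toReal_mono (ENNReal.add_ne_top.2 ⟨ha, hd⟩) hba
  rw [abs_sub_le_iff]
  constructor <;> linarith [ENNReal.toReal_nonneg (a := c), ENNReal.toReal_nonneg (a := d)]

lemma abs_sub_le_mul_of_abs_sub_succ_le {f : ℕ → ℝ} {B : ℝ} {n k k' : ℕ} (hB : 0 ≤ B)
    (h : ∀ j, j + 1 < n → |f j - f (j + 1)| ≤ B) (hk : k < n) (hk' : k' < n) :
    |f k - f k'| ≤ n * B := by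
  wlog hkk : k ≤ k' generalizing k k'
  · rw [abs_sub_comm]
    exact this hk' hk (by omega)
  calc |f k - f k'| = dist (f k) (f k') := (Real.dist_eq _ _).symm
    _ ≤ ∑ i ∈ Finset.Ico k k', dist (f i) (f (i + 1)) := dist_le_Ico_sum_dist f hkk
    _ ≤ ∑ i ∈ Finset.Ico k k', B := Finset.sum_le_sum fun i hi => by
        rw [Real.dist_eq]
        exact h i (by simp only [Finset.mem_Ico] at hi; omega)
    _ = (k' - k : ℕ) * B := by simp
    _ ≤ n * B := by gcongr; omega

def anchoredSet {Ω : Type*} (T : Ω → Ω) (U : Set Ω) (L j : ℕ) (R : Set Ω) : Set Ω :=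
  {x | T^[L] x ∈ U ∧ ∃ v ≤ L, T^[v] x ∈ U ∩ R ∧ hitCount T U (v + 1) (L + 1) x = j}

lemma measure_anchoredSet_le {Ω : Type*} [MeasurableSpace Ω] {μ : Measure Ω} {T : Ω → Ω}
    {U R : Set Ω} (hT : MeasurePreserving T μ μ) (hU : MeasurableSet U) (hR : MeasurableSet R)
    (L j : ℕ) : μ (anchoredSet T U L j R) ≤ μ (U ∩ R) := by
  set D : ℕ → Set Ω := fun v =>
    U ∩ R ∩ {y | T^[L - v] y ∈ U ∧ hitCount T U 1 (L - v + 1) y = j}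
  have hD : ∀ v, MeasurableSet (D v) := fun v =>
    (hU.inter hR).inter <| ((hT.measurable.iterate _) hU).inter <|
      measurable_hitCount hT.measurable hU _ _ (measurableSet_singleton j)
  -- on `D v`, time `L - v` is the `j`-th return, so `v` is determined by the point
  have hdisj : ((Finset.range (L + 1) : Finset ℕ) : Set ℕ).PairwiseDisjoint D := by
    intro v hv w hw hvw
    refine Set.disjoint_left.2 fun y hyv hyw => ?_
    wlog hlt : v < w generalizing v w
    · exact this hw hv hvw.symm hyw hyv (by simp at hv hw; omega)
    simp only [Finset.coe_range, Set.mem_Iio] at hv hw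
    have hsplit : hitCount T U 1 (L - w + 1) y + hitCount T U (L - w + 1) (L - v + 1) y =
        hitCount T U 1 (L - v + 1) y := hitCount_add_hitCount (by omega) (by omega)
    have hpos := hitCount_pos_of_mem (show L - w + 1 ≤ L - v by omega) (Nat.lt_add_one _)
      hyv.2.1
    have := hyv.2.2
    have := hyw.2.2
    omega
  have hcover : anchoredSet T U L j R ⊆ ⋃ v ∈ Finset.range (L + 1), T^[v] ⁻¹' D v := by
    rintro x ⟨hxL, v, hvL, hxv, hcount⟩
    refine Set.mem_biUnion (Finset.mem_coe.2 (Finset.mem_range.2 (by omega))) ⟨hxv, ?_, ?_⟩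
    · rwa [← Function.iterate_add_apply, Nat.sub_add_cancel hvL]
    · rw [hitCount_iterate, ← hcount]
      congr 1 <;> omega
  calc μ (anchoredSet T U L j R) ≤ ∑ v ∈ Finset.range (L + 1), μ (T^[v] ⁻¹' D v) :=
        (measure_mono hcover).trans (measure_biUnion_finset_le _ _)
    _ = μ (⋃ v ∈ Finset.range (L + 1), D v) := by
        rw [measure_biUnion_finset hdisj fun v _ => hD v]
        exact Finset.sum_congr rfl fun v _ =>
          (hT.iterate v).measure_preimage (hD v).nullMeasurableSet
    _ ≤ μ (U ∩ R) := measure_mono (Set.iUnion₂_subset fun v _ => Set.inter_subset_left)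

def splitSet {Ω : Type*} (T : Ω → Ω) (U : Set Ω) (L ℓ k : ℕ) : Set Ω :=
  {x | Zminus T U L x = k} ∩ {x | Zplus T U L x = ℓ - k} ∩ T^[L] ⁻¹' U

/-- The `m`-th return time lies in `(L, 2L]`. -/
def lateReturnSet {Ω : Type*} (T : Ω → Ω) (U : Set Ω) (L m : ℕ) : Set Ω :=
  {y | visits T U y L < m ∧ m ≤ visits T U y (2 * L)}

/-- `splitSet T U L ℓ k` observed through the window `[g, 2L]` only, on the event that the first
visit after time `L` is at time `L + g`. -/
def gapSplitSet {Ω : Type*} (T : Ω → Ω) (U : Set Ω) (L ℓ k g : ℕ) : Set Ω :=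
  consecutiveHits T U L (L + g) ∩
    {x | hitCount T U g L x = k ∧ hitCount T U L (2 * L + 1) x = ℓ - k}

def shiftedSplitSet {Ω : Type*} (T : Ω → Ω) (U : Set Ω) (L ℓ k g : ℕ) : Set Ω :=
  consecutiveHits T U L (L + g) ∩
    {x | hitCount T U g (L + g) x = k ∧ hitCount T U (L + g) (2 * L + g + 1) x = ℓ - k}

section Events

variable {Ω : Type*} {T : Ω → Ω} {U : Set Ω} {L ℓ k g : ℕ} {x : Ω}

lemma mem_splitSet_iff : x ∈ splitSet T U L ℓ k ↔
    hitCount T U 0 L x = k ∧ hitCount T U L (2 * L + 1) x = ℓ - k ∧ T^[L] x ∈ U := by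
  simp [splitSet, Zminus_eq_hitCount, Zplus_eq_hitCount, and_assoc]

lemma preimage_iterate_splitSet_inter_consecutiveHits (hg : g ≤ L) :
    T^[g] ⁻¹' (splitSet T U L ℓ k ∩ consecutiveHits T U (L - g) L) =
      shiftedSplitSet T U L ℓ k g := by
  ext x
  rw [Set.preimage_inter, preimage_iterate_consecutiveHits, Nat.sub_add_cancel hg,
    shiftedSplitSet, Set.mem_inter_iff, Set.mem_inter_iff, Set.mem_preimage, mem_splitSet_iff,
    ← Function.iterate_add_apply, hitCount_iterate, hitCount_iterate]
  simp only [consecutiveHits, Set.mem_ofPred_eq, Nat.zero_add, Nat.add_comm L g,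
    show 2 * L + 1 + g = 2 * L + g + 1 by ring]
  tauto

lemma mem_gapSplitSet_iff (hx : x ∈ consecutiveHits T U L (L + g)) (hg : g ∈ Finset.Icc 1 L)
    (hk : k < ℓ) : x ∈ gapSplitSet T U L ℓ k g ↔
      hitCount T U g L x = k ∧ hitCount T U (L + g) (2 * L + 1) x = ℓ - k - 1 := by
  obtain ⟨hg₁, hgL⟩ := Finset.mem_Icc.1 hg
  have h := hitCount_eq_of_mem_consecutiveHits hx (by omega) le_rfl
    (show L + g ≤ 2 * L + 1 by omega)
  rw [hitCount_self] at h
  simp only [gapSplitSet, Set.mem_inter_iff, hx, true_and, Set.mem_ofPred_eq]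
  constructor <;> rintro ⟨h₁, h₂⟩ <;> exact ⟨h₁, by omega⟩

lemma mem_shiftedSplitSet_iff (hx : x ∈ consecutiveHits T U L (L + g)) (hg : g ∈ Finset.Icc 1 L) :
    x ∈ shiftedSplitSet T U L ℓ (k + 1) g ↔
      hitCount T U g L x = k ∧ hitCount T U (L + g) (2 * L + g + 1) x = ℓ - k - 1 := by
  obtain ⟨hg₁, hgL⟩ := Finset.mem_Icc.1 hg
  have h := hitCount_eq_of_mem_consecutiveHits hx (by omega) hgL le_rfl
  rw [hitCount_self] at h
  simp only [shiftedSplitSet, Set.mem_inter_iff, hx, true_and, Set.mem_ofPred_eq]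
  constructor <;> rintro ⟨h₁, h₂⟩ <;> exact ⟨by omega, by omega⟩

lemma iterate_mem_inter_lateReturnSet_iff (hx : x ∈ consecutiveHits T U L (L + g))
    (hg : g ∈ Finset.Icc 1 L) {m : ℕ} :
    T^[L] x ∈ U ∩ lateReturnSet T U L m ↔
      hitCount T U (L + g) (2 * L + 1) x < m ∧ m ≤ hitCount T U (L + g) (3 * L + 1) x := by
  obtain ⟨hg₁, hgL⟩ := Finset.mem_Icc.1 hg
  simp only [Set.mem_inter_iff, hx.1, true_and, lateReturnSet, Set.mem_ofPred_eq,
    visits_iterate_eq_hitCount, show L + L + 1 = 2 * L + 1 by ring,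
    show L + 2 * L + 1 = 3 * L + 1 by ring,
    hitCount_succ_eq_of_mem_consecutiveHits hx (by omega) (show L + g ≤ 2 * L + 1 by omega),
    hitCount_succ_eq_of_mem_consecutiveHits hx (by omega) (show L + g ≤ 3 * L + 1 by omega)]

end Events

section EventMeasurability

variable {Ω : Type*} [MeasurableSpace Ω] {T : Ω → Ω} {U : Set Ω}

lemma measurableSet_splitSet (hT : Measurable T) (hU : MeasurableSet U) (L ℓ k : ℕ) :
    MeasurableSet (splitSet T U L ℓ k) := by
  have hset : splitSet T U L ℓ k = hitCount T U 0 L ⁻¹' {k} ∩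
      hitCount T U L (2 * L + 1) ⁻¹' {ℓ - k} ∩ T^[L] ⁻¹' U := by
    ext x
    simp [mem_splitSet_iff, and_assoc]
  rw [hset]
  exact ((measurable_hitCount hT hU _ _ (measurableSet_singleton _)).inter
    (measurable_hitCount hT hU _ _ (measurableSet_singleton _))).inter ((hT.iterate L) hU)

lemma measurableSet_lateReturnSet (hT : Measurable T) (hU : MeasurableSet U) (L m : ℕ) :
    MeasurableSet (lateReturnSet T U L m) :=
  (measurable_visits hT hU L measurableSet_Iio).inter
    (measurable_visits hT hU (2 * L) measurableSet_Ici)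

lemma measurableSet_gapSplitSet (hT : Measurable T) (hU : MeasurableSet U) (L ℓ k g : ℕ) :
    MeasurableSet (gapSplitSet T U L ℓ k g) :=
  (measurableSet_consecutiveHits hT hU _ _).inter <|
    (measurable_hitCount hT hU _ _ (measurableSet_singleton _)).inter
      (measurable_hitCount hT hU _ _ (measurableSet_singleton _))

lemma measurableSet_shiftedSplitSet (hT : Measurable T) (hU : MeasurableSet U) (L ℓ k g : ℕ) :
    MeasurableSet (shiftedSplitSet T U L ℓ k g) :=
  (measurableSet_consecutiveHits hT hU _ _).inter <|
    (measurable_hitCount hT hU _ _ (measurableSet_singleton _)).inter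
      (measurable_hitCount hT hU _ _ (measurableSet_singleton _))

end EventMeasurability

section Gaps

variable {Ω : Type*} {T : Ω → Ω} {U : Set Ω} {L ℓ k : ℕ}

lemma pairwiseDisjoint_consecutiveHits_right (a : ℕ) :
    (Set.Ici 1).PairwiseDisjoint fun g => consecutiveHits T U a (a + g) := by
  intro g hg g' hg' hne
  refine Set.disjoint_left.2 fun x hx hx' => hne ?_
  have := consecutiveHits_right_unique hx hx' (by simp at hg; omega) (by simp at hg'; omega)
  omega

lemma pairwiseDisjoint_consecutiveHits_left (b : ℕ) :
    (Set.Icc 1 b).PairwiseDisjoint fun g => consecutiveHits T U (b - g) b := by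
  intro g hg g' hg' hne
  refine Set.disjoint_left.2 fun x hx hx' => hne ?_
  simp only [Set.mem_Icc] at hg hg'
  have := consecutiveHits_left_unique hx hx' (by omega) (by omega)
  omega

lemma pairwiseDisjoint_of_subset_consecutiveHits {X : ℕ → Set Ω}
    (hX : ∀ g, X g ⊆ consecutiveHits T U L (L + g)) :
    ((Finset.Icc 1 L : Finset ℕ) : Set ℕ).PairwiseDisjoint X :=
  ((pairwiseDisjoint_consecutiveHits_right L).subset fun g hg => by
    simp only [Finset.coe_Icc, Set.mem_Icc] at hg
    exact hg.1).mono hX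

lemma splitSet_subset_biUnion_consecutiveHits_right (hk : k + 2 ≤ ℓ) :
    splitSet T U L ℓ k ⊆ ⋃ g ∈ Finset.Icc 1 L, consecutiveHits T U L (L + g) := by
  intro x hx
  obtain ⟨-, hplus, hxL⟩ := mem_splitSet_iff.1 hx
  have hsplit : hitCount T U L (L + 1) x + hitCount T U (L + 1) (2 * L + 1) x =
      hitCount T U L (2 * L + 1) x := hitCount_add_hitCount (by omega) (by omega)
  rw [hitCount_self_add_one hxL] at hsplit
  obtain ⟨c, hLc, hc, hxc⟩ := exists_consecutiveHits_right hxL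
    (by omega : 0 < hitCount T U (L + 1) (2 * L + 1) x)
  exact Set.mem_biUnion (Finset.mem_coe.2 (Finset.mem_Icc.2 ⟨by omega, by omega⟩))
    (show x ∈ consecutiveHits T U L (L + (c - L)) by rwa [Nat.add_sub_cancel' hLc.le])

lemma splitSet_subset_biUnion_consecutiveHits_left :
    splitSet T U L ℓ (k + 1) ⊆ ⋃ g ∈ Finset.Icc 1 L, consecutiveHits T U (L - g) L := by
  intro x hx
  obtain ⟨hminus, -, hxL⟩ := mem_splitSet_iff.1 hx
  obtain ⟨c, -, hc, hxc⟩ := exists_consecutiveHits_left hxL (by omega : 0 < hitCount T U 0 L x)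
  exact Set.mem_biUnion (Finset.mem_coe.2 (Finset.mem_Icc.2 ⟨by omega, by omega⟩))
    (show x ∈ consecutiveHits T U (L - (L - c)) L by rwa [Nat.sub_sub_self hc.le])

end Gaps

section Comparison

variable {Ω : Type*} {T : Ω → Ω} {U : Set Ω} {L ℓ k g : ℕ} {x : Ω}

lemma exists_first_hit_of_mem_splitSet (hx : x ∈ splitSet T U L ℓ k) :
    ∃ v ≤ L, T^[v] x ∈ U ∧ hitCount T U 0 v x = 0 ∧ hitCount T U (v + 1) (L + 1) x = k ∧
      ℓ - 1 ≤ visits T U (T^[v] x) (2 * L) := by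
  obtain ⟨hminus, hplus, hxL⟩ := mem_splitSet_iff.1 hx
  have hL : hitCount T U 0 (L + 1) x = k + 1 := by
    rw [← hitCount_add_hitCount (Nat.zero_le L) (Nat.le_add_right L 1),
      hitCount_self_add_one hxL, hminus]
  obtain ⟨v, -, hv, hxv, hzero⟩ := exists_first_hit
    (show 0 < hitCount T U 0 (L + 1) x by omega)
  have hv₁ : hitCount T U 0 (v + 1) x = 1 := by
    rw [← hitCount_add_hitCount (Nat.zero_le v) (Nat.le_add_right v 1), hzero,
      hitCount_self_add_one hxv]
  have hbefore : hitCount T U 0 (v + 1) x + hitCount T U (v + 1) (L + 1) x =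
      hitCount T U 0 (L + 1) x := hitCount_add_hitCount (by omega) (by omega)
  have hwindow : hitCount T U 0 (v + 1) x + hitCount T U (v + 1) (2 * L + 1) x =
      hitCount T U 0 L x + hitCount T U L (2 * L + 1) x := by
    rw [hitCount_add_hitCount (by omega) (by omega), hitCount_add_hitCount (by omega) (by omega)]
  have hmono : hitCount T U (v + 1) (2 * L + 1) x ≤ hitCount T U (v + 1) (v + 2 * L + 1) x :=
    hitCount_mono le_rfl (by omega)
  refine ⟨v, by omega, hxv, hzero, by omega, ?_⟩
  rw [visits_iterate_eq_hitCount]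
  omega

lemma splitSet_inter_diff_gapSplitSet_subset (hk : k + 2 ≤ ℓ) :
    (splitSet T U L ℓ k ∩ consecutiveHits T U L (L + g)) \ gapSplitSet T U L ℓ k g ⊆
      anchoredSet T U L k (lateReturnSet T U L (ℓ - 1)) := by
  rintro x ⟨⟨hx, hxg⟩, hxE⟩
  obtain ⟨hminus, hplus, hxL⟩ := mem_splitSet_iff.1 hx
  obtain ⟨v, hvL, hxv, hzero, hcount, hlate⟩ := exists_first_hit_of_mem_splitSet hx
  have hvg : v < g := by
    by_contra! hgv
    have hg : hitCount T U 0 g x ≤ hitCount T U 0 v x := hitCount_mono le_rfl hgv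
    have hsplit : hitCount T U 0 g x + hitCount T U g L x = hitCount T U 0 L x :=
      hitCount_add_hitCount (Nat.zero_le g) (by omega)
    exact hxE ⟨hxg, by omega, hplus⟩
  have hmono : hitCount T U (v + 1) (v + L + 1) x ≤ hitCount T U (v + 1) (L + g) x :=
    hitCount_mono le_rfl (by omega)
  have hsplit : hitCount T U (v + 1) (L + 1) x + hitCount T U (L + 1) (L + g) x =
      hitCount T U (v + 1) (L + g) x := hitCount_add_hitCount (by omega) (by omega)
  refine ⟨hxL, v, hvL, ⟨hxv, ?_, hlate⟩, hcount⟩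
  rw [visits_iterate_eq_hitCount]
  have := hxg.2.2
  omega

lemma gapSplitSet_diff_splitSet_inter_subset (hg : g ≤ L) (hk : k + 2 ≤ ℓ) :
    gapSplitSet T U L ℓ k g \ (splitSet T U L ℓ k ∩ consecutiveHits T U L (L + g)) ⊆
      anchoredSet T U L (k + 1) (lateReturnSet T U L ℓ) := by
  rintro x ⟨⟨hxg, hgL, hplus⟩, hxA⟩
  have hsplit : hitCount T U 0 g x + hitCount T U g L x = hitCount T U 0 L x :=
    hitCount_add_hitCount (Nat.zero_le g) hg
  have hpos : 0 < hitCount T U 0 g x := by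
    by_contra! h
    exact hxA ⟨mem_splitSet_iff.2 ⟨by omega, hplus, hxg.1⟩, hxg⟩
  obtain ⟨v, -, hvg, hxv, hzero⟩ := exists_last_hit hpos
  have hL : hitCount T U (v + 1) (L + 1) x = hitCount T U (v + 1) L x + 1 := by
    rw [← hitCount_add_hitCount (by omega) (Nat.le_add_right L 1), hitCount_self_add_one hxg.1]
  have hvL : hitCount T U (v + 1) g x + hitCount T U g L x = hitCount T U (v + 1) L x :=
    hitCount_add_hitCount (by omega) hg
  have hv2L : hitCount T U (v + 1) g x + hitCount T U g (2 * L + 1) x =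
      hitCount T U (v + 1) (2 * L + 1) x := hitCount_add_hitCount (by omega) (by omega)
  have hg2L : hitCount T U g L x + hitCount T U L (2 * L + 1) x =
      hitCount T U g (2 * L + 1) x := hitCount_add_hitCount hg (by omega)
  have hgap : hitCount T U (v + 1) (L + 1) x + hitCount T U (L + 1) (L + g) x =
      hitCount T U (v + 1) (L + g) x := hitCount_add_hitCount (by omega) (by omega)
  have hmono₁ : hitCount T U (v + 1) (v + L + 1) x ≤ hitCount T U (v + 1) (L + g) x :=
    hitCount_mono le_rfl (by omega)
  have hmono₂ : hitCount T U (v + 1) (2 * L + 1) x ≤ hitCount T U (v + 1) (v + 2 * L + 1) x :=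
    hitCount_mono le_rfl (by omega)
  have := hxg.2.2
  refine ⟨hxg.1, v, by omega, ⟨hxv, ?_, ?_⟩, by omega⟩ <;>
    rw [visits_iterate_eq_hitCount] <;> omega

lemma shiftedSplitSet_diff_gapSplitSet_subset (hg : g ∈ Finset.Icc 1 L) (hk : k < ℓ) :
    shiftedSplitSet T U L ℓ (k + 1) g \ gapSplitSet T U L ℓ k g ⊆
      T^[L] ⁻¹' (U ∩ lateReturnSet T U L (ℓ - k - 1)) := by
  rintro x ⟨hxF, hxE⟩
  have hxg := hxF.1
  rw [mem_shiftedSplitSet_iff hxg hg] at hxF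
  rw [mem_gapSplitSet_iff hxg hg hk] at hxE
  have hmono₁ : hitCount T U (L + g) (2 * L + 1) x ≤ hitCount T U (L + g) (2 * L + g + 1) x :=
    hitCount_mono le_rfl (by omega)
  have hmono₂ : hitCount T U (L + g) (2 * L + g + 1) x ≤ hitCount T U (L + g) (3 * L + 1) x :=
    hitCount_mono le_rfl (by simp only [Finset.mem_Icc] at hg; omega)
  exact (iterate_mem_inter_lateReturnSet_iff hxg hg).2
    ⟨lt_of_le_of_ne (hxF.2 ▸ hmono₁) fun h => hxE ⟨hxF.1, h⟩, hxF.2 ▸ hmono₂⟩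

lemma gapSplitSet_diff_shiftedSplitSet_subset (hg : g ∈ Finset.Icc 1 L) (hk : k < ℓ) :
    gapSplitSet T U L ℓ k g \ shiftedSplitSet T U L ℓ (k + 1) g ⊆
      T^[L] ⁻¹' (U ∩ lateReturnSet T U L (ℓ - k)) := by
  rintro x ⟨hxE, hxF⟩
  have hxg := hxE.1
  rw [mem_gapSplitSet_iff hxg hg hk] at hxE
  rw [mem_shiftedSplitSet_iff hxg hg] at hxF
  have hmono₁ : hitCount T U (L + g) (2 * L + 1) x ≤ hitCount T U (L + g) (2 * L + g + 1) x :=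
    hitCount_mono le_rfl (by omega)
  have hmono₂ : hitCount T U (L + g) (2 * L + g + 1) x ≤ hitCount T U (L + g) (3 * L + 1) x :=
    hitCount_mono le_rfl (by simp only [Finset.mem_Icc] at hg; omega)
  have hne : hitCount T U (L + g) (2 * L + g + 1) x ≠ ℓ - k - 1 := fun h => hxF ⟨hxE.1, h⟩
  exact (iterate_mem_inter_lateReturnSet_iff hxg hg).2 ⟨by omega, by omega⟩

end Comparison

section Estimates

variable {Ω : Type*} [MeasurableSpace Ω] {μ : Measure Ω} {T : Ω → Ω} {U : Set Ω} {L ℓ k : ℕ}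

lemma measure_splitSet_eq_sum (hT : Measurable T) (hU : MeasurableSet U) (hk : k + 2 ≤ ℓ) :
    μ (splitSet T U L ℓ k) =
      ∑ g ∈ Finset.Icc 1 L, μ (splitSet T U L ℓ k ∩ consecutiveHits T U L (L + g)) :=
  measure_eq_sum_measure_inter (measurableSet_splitSet hT hU L ℓ k)
    (fun _ _ => measurableSet_consecutiveHits hT hU _ _)
    (pairwiseDisjoint_of_subset_consecutiveHits fun _ => subset_rfl)
    (splitSet_subset_biUnion_consecutiveHits_right hk)

lemma measure_splitSet_le_sum_gapSplitSet_add (hT : MeasurePreserving T μ μ)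
    (hU : MeasurableSet U) (hk : k + 2 ≤ ℓ) :
    μ (splitSet T U L ℓ k) ≤ ∑ g ∈ Finset.Icc 1 L, μ (gapSplitSet T U L ℓ k g) +
      μ (U ∩ lateReturnSet T U L (ℓ - 1)) := by
  have hTm := hT.measurable
  rw [measure_splitSet_eq_sum hTm hU hk]
  refine (sum_measure_le_sum_measure_add
    (fun _ _ => (measurableSet_splitSet hTm hU L ℓ k).inter
      (measurableSet_consecutiveHits hTm hU _ _))
    (fun _ _ => measurableSet_gapSplitSet hTm hU L ℓ k _)
    (pairwiseDisjoint_of_subset_consecutiveHits fun _ => Set.inter_subset_right)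
    fun _ _ => splitSet_inter_diff_gapSplitSet_subset hk).trans ?_
  exact add_le_add le_rfl
    (measure_anchoredSet_le hT hU (measurableSet_lateReturnSet hTm hU L _) L k)

lemma sum_gapSplitSet_le_measure_splitSet_add (hT : MeasurePreserving T μ μ)
    (hU : MeasurableSet U) (hk : k + 2 ≤ ℓ) :
    ∑ g ∈ Finset.Icc 1 L, μ (gapSplitSet T U L ℓ k g) ≤
      μ (splitSet T U L ℓ k) + μ (U ∩ lateReturnSet T U L ℓ) := by
  have hTm := hT.measurable
  rw [measure_splitSet_eq_sum hTm hU hk]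
  refine (sum_measure_le_sum_measure_add (fun _ _ => measurableSet_gapSplitSet hTm hU L ℓ k _)
    (fun _ _ => (measurableSet_splitSet hTm hU L ℓ k).inter
      (measurableSet_consecutiveHits hTm hU _ _))
    (pairwiseDisjoint_of_subset_consecutiveHits fun _ => Set.inter_subset_left)
    fun _ hg => gapSplitSet_diff_splitSet_inter_subset (Finset.mem_Icc.1 hg).2 hk).trans ?_
  exact add_le_add le_rfl
    (measure_anchoredSet_le hT hU (measurableSet_lateReturnSet hTm hU L _) L (k + 1))

lemma measure_splitSet_succ_eq_sum (hT : MeasurePreserving T μ μ) (hU : MeasurableSet U) :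
    μ (splitSet T U L ℓ (k + 1)) =
      ∑ g ∈ Finset.Icc 1 L, μ (shiftedSplitSet T U L ℓ (k + 1) g) := by
  have hTm := hT.measurable
  rw [measure_eq_sum_measure_inter (measurableSet_splitSet hTm hU L ℓ (k + 1))
    (fun _ _ => measurableSet_consecutiveHits hTm hU _ _)
    ((pairwiseDisjoint_consecutiveHits_left L).subset (by simp))
    splitSet_subset_biUnion_consecutiveHits_left]
  refine Finset.sum_congr rfl fun g hg => ?_
  rw [← preimage_iterate_splitSet_inter_consecutiveHits (Finset.mem_Icc.1 hg).2,
    (hT.iterate g).measure_preimage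
      ((measurableSet_splitSet hTm hU L ℓ (k + 1)).inter
        (measurableSet_consecutiveHits hTm hU _ _)).nullMeasurableSet]

lemma measure_inter_lateReturnSet_eq_preimage (hT : MeasurePreserving T μ μ)
    (hU : MeasurableSet U) (L m : ℕ) :
    μ (U ∩ lateReturnSet T U L m) = μ (T^[L] ⁻¹' (U ∩ lateReturnSet T U L m)) :=
  ((hT.iterate L).measure_preimage
    (hU.inter (measurableSet_lateReturnSet hT.measurable hU L m)).nullMeasurableSet).symm

lemma measure_splitSet_succ_le_sum_gapSplitSet_add (hT : MeasurePreserving T μ μ)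
    (hU : MeasurableSet U) (hk : k < ℓ) :
    μ (splitSet T U L ℓ (k + 1)) ≤ ∑ g ∈ Finset.Icc 1 L, μ (gapSplitSet T U L ℓ k g) +
      μ (U ∩ lateReturnSet T U L (ℓ - k - 1)) := by
  rw [measure_splitSet_succ_eq_sum hT hU, measure_inter_lateReturnSet_eq_preimage hT hU]
  exact sum_measure_le_sum_measure_add
    (fun _ _ => measurableSet_shiftedSplitSet hT.measurable hU L ℓ (k + 1) _)
    (fun _ _ => measurableSet_gapSplitSet hT.measurable hU L ℓ k _)
    (pairwiseDisjoint_of_subset_consecutiveHits fun _ => Set.inter_subset_left)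
    fun _ hg => shiftedSplitSet_diff_gapSplitSet_subset hg hk

lemma sum_gapSplitSet_le_measure_splitSet_succ_add (hT : MeasurePreserving T μ μ)
    (hU : MeasurableSet U) (hk : k < ℓ) :
    ∑ g ∈ Finset.Icc 1 L, μ (gapSplitSet T U L ℓ k g) ≤
      μ (splitSet T U L ℓ (k + 1)) + μ (U ∩ lateReturnSet T U L (ℓ - k)) := by
  rw [measure_splitSet_succ_eq_sum hT hU, measure_inter_lateReturnSet_eq_preimage hT hU]
  exact sum_measure_le_sum_measure_add
    (fun _ _ => measurableSet_gapSplitSet hT.measurable hU L ℓ k _)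
    (fun _ _ => measurableSet_shiftedSplitSet hT.measurable hU L ℓ (k + 1) _)
    (pairwiseDisjoint_of_subset_consecutiveHits fun _ => Set.inter_subset_left)
    fun _ hg => gapSplitSet_diff_shiftedSplitSet_subset hg hk

lemma abs_measure_splitSet_sub_succ_le [IsFiniteMeasure μ] (hT : MeasurePreserving T μ μ)
    (hU : MeasurableSet U) (hk : k + 2 ≤ ℓ) :
    |(μ (splitSet T U L ℓ k)).toReal - (μ (splitSet T U L ℓ (k + 1))).toReal| ≤
      (μ (U ∩ lateReturnSet T U L (ℓ - 1))).toReal + (μ (U ∩ lateReturnSet T U L ℓ)).toReal +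
        ((μ (U ∩ lateReturnSet T U L (ℓ - k))).toReal +
          (μ (U ∩ lateReturnSet T U L (ℓ - k - 1))).toReal) := by
  set M := ∑ g ∈ Finset.Icc 1 L, μ (gapSplitSet T U L ℓ k g)
  have hM : M ≠ ∞ := ne_top_of_le_ne_top (by finiteness)
    (sum_gapSplitSet_le_measure_splitSet_add (L := L) hT hU hk)
  calc _ ≤ |(μ (splitSet T U L ℓ k)).toReal - M.toReal| +
        |M.toReal - (μ (splitSet T U L ℓ (k + 1))).toReal| := abs_sub_le _ _ _
    _ ≤ _ := add_le_add
        (ENNReal.abs_toReal_sub_le_add (measure_splitSet_le_sum_gapSplitSet_add hT hU hk)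
          (sum_gapSplitSet_le_measure_splitSet_add hT hU hk) (by finiteness) hM (by finiteness)
          (by finiteness))
        (ENNReal.abs_toReal_sub_le_add (sum_gapSplitSet_le_measure_splitSet_succ_add hT hU
          (by omega)) (measure_splitSet_succ_le_sum_gapSplitSet_add hT hU (by omega)) hM
          (by finiteness) (by finiteness) (by finiteness))

lemma measure_splitSet_le (hT : MeasurePreserving T μ μ) (hU : MeasurableSet U) :
    μ (splitSet T U L ℓ k) ≤ μ (U ∩ {y | ℓ - 1 ≤ visits T U y (2 * L)}) := by
  refine (measure_mono fun x hx => ?_).trans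
    (measure_anchoredSet_le hT hU (measurable_visits hT.measurable hU _ measurableSet_Ici) L k)
  obtain ⟨v, hvL, hxv, -, hcount, hlate⟩ := exists_first_hit_of_mem_splitSet hx
  exact ⟨(mem_splitSet_iff.1 hx).2.2, v, hvL, ⟨hxv, hlate⟩, hcount⟩

lemma abs_measure_splitSet_sub_le [IsFiniteMeasure μ] (hT : MeasurePreserving T μ μ)
    (hU : MeasurableSet U) {ℓ₀ : ℕ} {ρ θ : ℝ}
    (hρ : ∀ m, 1 ≤ m → m ≤ ℓ₀ → (μ (U ∩ lateReturnSet T U L m)).toReal ≤ ρ)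
    (hθ : (μ (U ∩ {y | ℓ₀ ≤ visits T U y (2 * L)})).toReal ≤ θ)
    {k' : ℕ} (hk : k < ℓ) (hk' : k' < ℓ) :
    |(μ (splitSet T U L ℓ k)).toReal - (μ (splitSet T U L ℓ k')).toReal| ≤
      max (ℓ₀ * (4 * ρ)) θ := by
  rcases le_or_gt ℓ ℓ₀ with hℓ | hℓ
  · have hρ₀ : 0 ≤ ρ := ENNReal.toReal_nonneg.trans (hρ 1 le_rfl (by omega))
    have hstep : ∀ j, j + 1 < ℓ →
        |(μ (splitSet T U L ℓ j)).toReal - (μ (splitSet T U L ℓ (j + 1))).toReal| ≤ 4 * ρ :=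
      fun j hj => (abs_measure_splitSet_sub_succ_le hT hU (by omega)).trans <| by
        linarith [hρ (ℓ - 1) (by omega) (by omega), hρ ℓ (by omega) hℓ,
          hρ (ℓ - j) (by omega) (by omega), hρ (ℓ - j - 1) (by omega) (by omega)]
    calc _ ≤ ℓ * (4 * ρ) := abs_sub_le_mul_of_abs_sub_succ_le (by linarith) hstep hk hk'
      _ ≤ ℓ₀ * (4 * ρ) := by gcongr
      _ ≤ _ := le_max_left _ _
  · have hbound : ∀ j, (μ (splitSet T U L ℓ j)).toReal ≤ θ := fun j =>
      (ENNReal.toReal_mono (by finiteness) ((measure_splitSet_le hT hU).trans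
        (measure_mono (Set.inter_subset_inter_right U fun y hy =>
          (show ℓ₀ ≤ ℓ - 1 by omega).trans hy)))).trans hθ
    exact le_max_of_le_right (abs_sub_le_of_nonneg_of_le ENNReal.toReal_nonneg (hbound k)
      ENNReal.toReal_nonneg (hbound k'))

end Estimates

section ConditionalProbability

variable {Ω : Type*} [MeasurableSpace Ω] {μ : Measure Ω} [IsFiniteMeasure μ] {T : Ω → Ω}
  {U : Set Ω} {a δ : ℝ}

lemma toReal_measure_inter_eq_condProb_mul (hU : μ U ≠ 0) (m t : ℕ) :
    (μ (U ∩ {y | m ≤ visits T U y t})).toReal =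
      condProb μ U {x | tauIter T U m x ≤ t} * (μ U).toReal := by
  simp only [condProb, tauIter_le_iff, Set.inter_comm U]
  rw [div_mul_cancel₀ _ (ENNReal.toReal_ne_zero.2 ⟨hU, measure_ne_top μ U⟩)]

lemma toReal_measure_inter_le_of_condProb (hU : μ U ≠ 0) {m t : ℕ}
    (h : |condProb μ U {x | tauIter T U m x ≤ t} - a| < δ) :
    (μ (U ∩ {y | m ≤ visits T U y t})).toReal ≤ (a + δ) * (μ U).toReal := by
  rw [toReal_measure_inter_eq_condProb_mul hU]
  exact mul_le_mul_of_nonneg_right (by linarith [abs_lt.1 h]) ENNReal.toReal_nonneg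

lemma toReal_measure_inter_lateReturnSet_le (hT : Measurable T) (hUm : MeasurableSet U)
    (hU : μ U ≠ 0) {L m : ℕ} (hL : |condProb μ U {x | tauIter T U m x ≤ L} - a| < δ)
    (h2L : |condProb μ U {x | tauIter T U m x ≤ (2 * L : ℕ)} - a| < δ) :
    (μ (U ∩ lateReturnSet T U L m)).toReal ≤ 2 * δ * (μ U).toReal := by
  have hsub : U ∩ {y | m ≤ visits T U y L} ⊆ U ∩ {y | m ≤ visits T U y (2 * L)} :=
    Set.inter_subset_inter_right U fun y hy => hy.trans (visits_mono (by omega))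
  have hdiff : U ∩ lateReturnSet T U L m =
      (U ∩ {y | m ≤ visits T U y (2 * L)}) \ (U ∩ {y | m ≤ visits T U y L}) := by
    ext y
    simp only [lateReturnSet, Set.mem_inter_iff, Set.mem_sdiff, Set.mem_ofPred_eq, not_and,
      not_le]
    tauto
  rw [hdiff, measure_sdiff hsub
      (hUm.inter (measurable_visits hT hUm L measurableSet_Ici)).nullMeasurableSet
      (measure_ne_top μ _), ENNReal.toReal_sub_of_le (measure_mono hsub) (measure_ne_top μ _),
    toReal_measure_inter_eq_condProb_mul hU, toReal_measure_inter_eq_condProb_mul hU, ← sub_mul]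
  exact mul_le_mul_of_nonneg_right (by linarith [abs_lt.1 hL, abs_lt.1 h2L])
    ENNReal.toReal_nonneg

end ConditionalProbability

lemma tendsto_zero_of_summable_natCast_mul {a : ℕ → ℝ} (h : Summable fun n : ℕ => (n : ℝ) * a n) :
    Tendsto a atTop (𝓝 0) := by
  refine squeeze_zero_norm' ?_ (tendsto_norm_zero.comp h.tendsto_atTop_zero)
  filter_upwards [eventually_ge_atTop 1] with n hn
  rw [Function.comp_apply, norm_mul, Real.norm_natCast]
  exact le_mul_of_one_le_left (norm_nonneg _) (by exact_mod_cast hn)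

lemma eventually_eventually_abs_sub_lt {f : ℕ → ℕ → ℝ} {a : ℕ → ℝ} {b : ℝ} {L₁ : ℕ}
    (hf : ∀ t ≥ L₁, Tendsto (fun n => f n t) atTop (𝓝 (a t))) (ha : Tendsto a atTop (𝓝 b))
    {ε : ℝ} (hε : 0 < ε) : ∀ᶠ t in atTop, ∀ᶠ n in atTop, |f n t - b| < ε := by
  filter_upwards [eventually_ge_atTop L₁, Metric.tendsto_nhds.1 ha (ε / 2) (half_pos hε)]
    with t ht hat
  filter_upwards [Metric.tendsto_nhds.1 (hf t ht) (ε / 2) (half_pos hε)] with n hn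
  rw [Real.dist_eq] at hat hn
  calc |f n t - b| ≤ |f n t - a t| + |a t - b| := abs_sub_le _ _ _
    _ < ε := by linarith

lemma eventually_eventually_forall_abs_sub_lt {f : ℕ → ℕ → ℕ → ℝ} {a : ℕ → ℕ → ℝ} {b : ℕ → ℝ}
    {L₁ : ℕ} {s : Finset ℕ} (hf : ∀ m ∈ s, ∀ t ≥ L₁, Tendsto (fun n => f m n t) atTop (𝓝 (a m t)))
    (ha : ∀ m ∈ s, Tendsto (a m) atTop (𝓝 (b m))) {ε : ℝ} (hε : 0 < ε) :
    ∀ᶠ t in atTop, ∀ᶠ n in atTop, ∀ m ∈ s, |f m n t - b m| < ε ∧ |f m n (2 * t) - b m| < ε := by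
  have h : ∀ m ∈ s, ∀ᶠ t in atTop, ∀ᶠ n in atTop, |f m n t - b m| < ε := fun m hm =>
    eventually_eventually_abs_sub_lt (hf m hm) (ha m hm) hε
  have h₂ : ∀ m ∈ s, ∀ᶠ t in atTop, (∀ᶠ n in atTop, |f m n t - b m| < ε) ∧
      ∀ᶠ n in atTop, |f m n (2 * t) - b m| < ε := fun m hm =>
    (h m hm).and ((tendsto_id.const_mul_atTop' two_pos).eventually (h m hm))
  filter_upwards [(eventually_all_finset s).2 h₂] with t ht
  exact (eventually_all_finset s).2 fun m hm => (ht m hm).1.and (ht m hm).2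

theorem stmt4_general {Ω : Type*} [MeasurableSpace Ω]
    (μ : Measure Ω) [IsProbabilityMeasure μ] (T : Ω → Ω)
    (hT : MeasurePreserving T μ μ)
    (U : ℕ → Set Ω) (hUmeas : ∀ n, MeasurableSet (U n))
    (hpos : ∀ n, 0 < μ (U n))
    (hatαL : ℕ → ℕ → ℝ) (hatα : ℕ → ℝ) (L₁ : ℕ)
    (hlimL : ∀ L ≥ L₁, ∀ ℓ ≥ 1,
      Tendsto (fun n => condProb μ (U n) {x | tauIter T (U n) (ℓ - 1) x ≤ (L : ℕ∞)})
        atTop (𝓝 (hatαL ℓ L)))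
    (hlim : ∀ ℓ ≥ 1, Tendsto (fun L => hatαL ℓ L) atTop (𝓝 (hatα ℓ)))
    (hsum : Summable fun ℓ : ℕ => (ℓ : ℝ) * hatα ℓ) :
    ∀ η > (0 : ℝ), ∃ L₀ : ℕ, ∀ L ≥ L₀, ∃ N : ℕ, ∀ n ≥ N,
      ∀ ℓ ≥ 1, ∀ k < ℓ, ∀ k' < ℓ,
        |(μ ({x | Zminus T (U n) L x = k} ∩ {x | Zplus T (U n) L x = ℓ - k} ∩
              T^[L] ⁻¹' U n)).toReal -
          (μ ({x | Zminus T (U n) L x = k'} ∩ {x | Zplus T (U n) L x = ℓ - k'} ∩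
              T^[L] ⁻¹' U n)).toReal|
          ≤ η * (μ (U n)).toReal := by
  intro η hη
  obtain ⟨ℓ₀, hℓ₀, hαℓ₀⟩ : ∃ ℓ₀ ≥ 1, hatα (ℓ₀ + 1) < η / 2 :=
    (((tendsto_zero_of_summable_natCast_mul hsum).comp (tendsto_add_atTop_nat 1)).eventually
      (gt_mem_nhds (half_pos hη))).and (eventually_ge_atTop 1) |>.exists.imp fun _ h => ⟨h.2, h.1⟩
  obtain ⟨δ, hδ, hδℓ₀⟩ : ∃ δ > 0, ℓ₀ * (8 * δ) = η :=
    ⟨η / (8 * ℓ₀), by positivity, by field_simp⟩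
  obtain ⟨L₀, hL₀⟩ := eventually_atTop.1 <| eventually_eventually_forall_abs_sub_lt
    (f := fun m n t => condProb μ (U n) {x | tauIter T (U n) m x ≤ t}) (s := Finset.Icc 1 ℓ₀)
    (fun m _ t ht => by simpa using hlimL t ht (m + 1) (by omega))
    (fun m _ => hlim (m + 1) (by omega)) hδ
  refine ⟨L₀, fun L hL => ?_⟩
  obtain ⟨N, hN⟩ := eventually_atTop.1 (hL₀ L hL)
  refine ⟨N, fun n hn ℓ _ k hk k' hk' => ?_⟩
  have hUn := (hpos n).ne'
  refine (abs_measure_splitSet_sub_le hT (hUmeas n) (ρ := 2 * δ * (μ (U n)).toReal)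
    (fun m hm₁ hm₂ => ?_)
    (toReal_measure_inter_le_of_condProb hUn (hN n hn ℓ₀ (by simp [hℓ₀])).2) hk hk').trans ?_
  · obtain ⟨h₁, h₂⟩ := hN n hn m (Finset.mem_Icc.2 ⟨hm₁, hm₂⟩)
    exact toReal_measure_inter_lateReturnSet_le hT.measurable (hUmeas n) hUn h₁ h₂
  · have hℓ₀' : (1 : ℝ) ≤ ℓ₀ := by exact_mod_cast hℓ₀
    refine max_le (le_of_eq (by rw [← hδℓ₀]; ring))
      (mul_le_mul_of_nonneg_right ?_ ENNReal.toReal_nonneg)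
    nlinarith

theorem stmt4 {Ω : Type*} [MeasurableSpace Ω]
    (μ : Measure Ω) [IsProbabilityMeasure μ] (T : Ω → Ω)
    (hT : MeasurePreserving T μ μ)
    (U : ℕ → Set Ω) (hUmeas : ∀ n, MeasurableSet (U n))
    (hnest : ∀ n, U (n + 1) ⊆ U n)
    (hpos : ∀ n, 0 < μ (U n))
    (hto0 : Tendsto (fun n => μ (U n)) atTop (𝓝 0))
    (hatαL : ℕ → ℕ → ℝ) (hatα : ℕ → ℝ) (L₁ : ℕ)
    (hlimL : ∀ L ≥ L₁, ∀ ℓ ≥ 1,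
      Tendsto (fun n => condProb μ (U n) {x | tauIter T (U n) (ℓ - 1) x ≤ (L : ℕ∞)})
        atTop (𝓝 (hatαL ℓ L)))
    (hlim : ∀ ℓ ≥ 1, Tendsto (fun L => hatαL ℓ L) atTop (𝓝 (hatα ℓ)))
    (hsum : Summable fun ℓ : ℕ => (ℓ : ℝ) * hatα ℓ) :
    ∀ η > (0 : ℝ), ∃ L₀ : ℕ, ∀ L ≥ L₀, ∃ N : ℕ, ∀ n ≥ N,
      ∀ ℓ ≥ 1, ∀ k < ℓ, ∀ k' < ℓ,
        |(μ ({x | Zminus T (U n) L x = k} ∩ {x | Zplus T (U n) L x = ℓ - k} ∩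
              T^[L] ⁻¹' U n)).toReal -
          (μ ({x | Zminus T (U n) L x = k'} ∩ {x | Zplus T (U n) L x = ℓ - k'} ∩
              T^[L] ⁻¹' U n)).toReal|
          ≤ η * (μ (U n)).toReal :=
  stmt4_general μ T hT U hUmeas hpos hatαL hatα L₁ hlimL hlim hsum
end

section
/- Let (U_n) be a nested sequence of measurable subsets of Ω with μ(U_n) > 0 for all n and μ(U_n) → 0. Assume that for all sufficiently large integers L the limits α̂_ℓ(L) = lim_{n→∞} μ_{U_n}(τ_{U_n}^{ℓ-1} ≤ L) exist for every ℓ ≥ 1, set α̂_ℓ = lim_{L→∞} α̂_ℓ(L), and assume α̂_ℓ → 0 as ℓ → ∞. Then lim_{L→∞} lim_{n→∞} μ({x ∈ Ω : τ_{U_n}(x) ≤ L}) / (L·μ(U_n)) = α_1, where α_1 = 1 − α̂_2. -/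
open MeasureTheory Filter Topology
open scoped Classical ENNReal

/-!
Splitting `{τ_U ≤ L}` according to the time `L - m` of the last visit to `U` and using the
invariance of `μ` gives `μ(τ_U ≤ L) = ∑_{m<L} μ(U \ {τ_U ≤ m})`, that is
`μ(τ_U ≤ L) / (L μ(U)) = 1 - (1/L) ∑_{m<L} μ_U(τ_U ≤ m)`.
As `n → ∞` the summands tend to `α̂₂(m)` (for `m ≥ L₁`), which tend to `α̂₂` as `m → ∞`, and a
Cesàro argument, with the finitely many remaining terms bounded by `1`, gives the limit `1 - α̂₂`.
-/

section FirstEntry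

variable {Ω : Type*} (T : Ω → Ω) (U : Set Ω)

lemma visits_mono_s8 (x : Ω) : Monotone (visits T U x) := fun _ _ hab =>
  Finset.card_le_card (Finset.filter_subset_filter _ (Finset.Icc_subset_Icc_right hab))

lemma tauIter_le_coe_iff (ℓ : ℕ) (x : Ω) (m : ℕ) :
    tauIter T U ℓ x ≤ m ↔ ℓ ≤ visits T U x m := by
  refine ⟨fun h => ?_, fun h => sInf_le ⟨m, h, rfl⟩⟩
  by_contra hm
  have hlt : ((m + 1 : ℕ) : ℕ∞) ≤ tauIter T U ℓ x := by
    refine le_sInf ?_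
    rintro _ ⟨j, hj, rfl⟩
    have : m < j := lt_of_not_ge fun hjm => hm (hj.trans (visits_mono_s8 T U x hjm))
    exact Nat.cast_le.mpr this
  exact absurd (hlt.trans h) (by exact_mod_cast Nat.not_succ_le_self m)

lemma tauIter_one_le_coe_iff (x : Ω) (m : ℕ) :
    tauIter T U 1 x ≤ m ↔ ∃ j ∈ Finset.Icc 1 m, T^[j] x ∈ U := by
  rw [tauIter_le_coe_iff, Nat.one_le_iff_ne_zero, visits, Ne, Finset.card_eq_zero,
    ← Ne, ← Finset.nonempty_iff_ne_empty, Finset.filter_nonempty_iff]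

lemma tauIter_one_le_coe_eq_biUnion (m : ℕ) :
    {x | tauIter T U 1 x ≤ m} = ⋃ j ∈ Finset.Icc 1 m, T^[j] ⁻¹' U := by
  ext x
  simp [tauIter_one_le_coe_iff]

lemma tauIter_one_le_coe_eq_biUnion_lastVisit (L : ℕ) :
    {x | tauIter T U 1 x ≤ L} =
      ⋃ m ∈ Finset.range L, T^[L - m] ⁻¹' (U \ {y | tauIter T U 1 y ≤ m}) := by
  ext x
  simp only [Set.mem_ofPred_eq, Set.mem_iUnion, Set.mem_preimage, Set.mem_sdiff,
    Finset.mem_range, exists_prop, tauIter_one_le_coe_iff, Finset.mem_Icc]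
  constructor
  · rintro ⟨j, hj, hjU⟩
    obtain ⟨k, hk, hkmax⟩ := Finset.exists_max_image
      ((Finset.Icc 1 L).filter fun i => T^[i] x ∈ U) id ⟨j, by simp [Finset.mem_Icc, hj, hjU]⟩
    simp only [Finset.mem_filter, Finset.mem_Icc, id] at hk hkmax
    refine ⟨L - k, by omega, ?_, ?_⟩
    · rw [Nat.sub_sub_self hk.1.2]
      exact hk.2
    · rintro ⟨i, hi, hiU⟩
      rw [Nat.sub_sub_self hk.1.2, ← Function.iterate_add_apply] at hiU
      have := hkmax (i + k) ⟨by omega, hiU⟩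
      omega
  · rintro ⟨m, hm, hU, -⟩
    exact ⟨L - m, by omega, hU⟩

lemma pairwiseDisjoint_lastVisit (L : ℕ) :
    (Finset.range L : Set ℕ).PairwiseDisjoint
      fun m => T^[L - m] ⁻¹' (U \ {y | tauIter T U 1 y ≤ m}) := by
  suffices h : ∀ m m', m < m' → m' < L → ∀ x, T^[L - m] x ∈ U →
      T^[L - m'] x ∈ U \ {y | tauIter T U 1 y ≤ m'} → False by
    intro m hm m' hm' hne
    simp only [Finset.coe_range, Set.mem_Iio] at hm hm'
    rw [Function.onFun, Set.disjoint_left]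
    rcases hne.lt_or_gt with hlt | hlt
    · exact fun x hx hx' => h m m' hlt hm' x hx.1 hx'
    · exact fun x hx hx' => h m' m hlt hm x hx'.1 hx
  rintro m m' hlt hm' x hU ⟨-, hτ⟩
  refine hτ ((tauIter_one_le_coe_iff T U _ m').mpr ⟨m' - m, ?_, ?_⟩)
  · simp only [Finset.mem_Icc]; omega
  · rwa [← Function.iterate_add_apply, show m' - m + (L - m') = L - m by omega]

end FirstEntry

section Measure

variable {Ω : Type*} [MeasurableSpace Ω]

lemma condProb_eq_measureReal (μ : Measure Ω) (U A : Set Ω) :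
    condProb μ U A = μ.real (A ∩ U) / μ.real U :=
  rfl

lemma abs_condProb_le_one (μ : Measure Ω) [IsFiniteMeasure μ] (U A : Set Ω) :
    |condProb μ U A| ≤ 1 := by
  rw [condProb_eq_measureReal, abs_of_nonneg (by positivity)]
  exact div_le_one_of_le₀ (measureReal_mono Set.inter_subset_right) measureReal_nonneg

variable {μ : Measure Ω} [IsFiniteMeasure μ] {T : Ω → Ω} {U : Set Ω}

lemma measurableSet_tauIter_one_le_coe (hT : Measurable T) (hU : MeasurableSet U) (m : ℕ) :
    MeasurableSet {x | tauIter T U 1 x ≤ m} := by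
  rw [tauIter_one_le_coe_eq_biUnion]
  exact Finset.measurableSet_biUnion _ fun j _ => hT.iterate j hU

lemma measureReal_tauIter_one_le_coe (hT : MeasurePreserving T μ μ) (hU : MeasurableSet U)
    (L : ℕ) :
    μ.real {x | tauIter T U 1 x ≤ L} =
      ∑ m ∈ Finset.range L, μ.real (U \ {y | tauIter T U 1 y ≤ m}) := by
  have hmeas (m : ℕ) : MeasurableSet (U \ {y | tauIter T U 1 y ≤ m}) :=
    hU.diff (measurableSet_tauIter_one_le_coe hT.measurable hU m)
  rw [tauIter_one_le_coe_eq_biUnion_lastVisit, measureReal_biUnion_finset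
    (pairwiseDisjoint_lastVisit T U L) fun m _ => hT.measurable.iterate _ (hmeas m)]
  exact Finset.sum_congr rfl fun m _ =>
    (hT.iterate _).measureReal_preimage (hmeas m).nullMeasurableSet

lemma measureReal_tauIter_one_le_coe_div (hT : MeasurePreserving T μ μ) (hU : MeasurableSet U)
    (hU₀ : μ U ≠ 0) {L : ℕ} (hL : L ≠ 0) :
    μ.real {x | tauIter T U 1 x ≤ L} / (L * μ.real U) =
      1 - (∑ m ∈ Finset.range L, condProb μ U {x | tauIter T U 1 x ≤ m}) / L := by
  have hc : μ.real U ≠ 0 := (measureReal_ne_zero_iff).mpr hU₀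
  have hdiff (m : ℕ) : μ.real (U \ {y | tauIter T U 1 y ≤ m}) =
      μ.real U - condProb μ U {y | tauIter T U 1 y ≤ m} * μ.real U := by
    have := measureReal_inter_add_sdiff (μ := μ) (s := U)
      (measurableSet_tauIter_one_le_coe hT.measurable hU m)
    rw [condProb_eq_measureReal, div_mul_cancel₀ _ hc, Set.inter_comm]
    exact eq_sub_of_add_eq' this
  rw [measureReal_tauIter_one_le_coe hT hU, Finset.sum_congr rfl fun m _ => hdiff m,
    Finset.sum_sub_distrib, Finset.sum_const, Finset.card_range, nsmul_eq_mul, ← Finset.sum_mul]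
  field_simp

end Measure

theorem exists_abs_average_sub_le_of_tendsto {a : ℕ → ℕ → ℝ} {b : ℕ → ℝ} {α B : ℝ} {L₁ : ℕ}
    (hB : ∀ n m, |a n m| ≤ B) (hab : ∀ m ≥ L₁, Tendsto (fun n => a n m) atTop (𝓝 (b m)))
    (hb : Tendsto b atTop (𝓝 α)) {ε : ℝ} (hε : 0 < ε) :
    ∃ L₀, ∀ L ≥ L₀, ∃ N, ∀ n ≥ N, |(∑ m ∈ Finset.range L, a n m) / L - α| ≤ ε := by
  have hαB : |α| ≤ B := le_of_tendsto hb.abs <| eventually_atTop.mpr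
    ⟨L₁, fun m hm => le_of_tendsto' (hab m hm).abs fun n => hB n m⟩
  -- `d m` bounds the eventual error of the `m`-th term; the Cesàro means of `d` tend to `0`.
  set d : ℕ → ℝ := fun m => if m < L₁ then 2 * B else |b m - α|
  have hd : Tendsto d atTop (𝓝 0) := by
    have : Tendsto (fun m => |b m - α|) atTop (𝓝 0) := by
      simpa using (hb.sub_const α).abs
    refine this.congr' (eventually_atTop.mpr ⟨L₁, fun m hm => ?_⟩)
    simp [d, not_lt.mpr hm]
  obtain ⟨L₀, hL₀⟩ := eventually_atTop.mp (hd.cesaro.eventually (ge_mem_nhds (half_pos hε)))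
  refine ⟨max L₀ 1, fun L hL => ?_⟩
  have hterm : ∀ᶠ n in atTop, ∀ m ∈ Finset.range L, |a n m - α| ≤ d m + ε / 2 := by
    rw [Finset.eventually_all]
    intro m _
    by_cases hm : m < L₁
    · refine Eventually.of_forall fun n => ?_
      simp only [d, if_pos hm]
      linarith [abs_sub (a n m) α, hB n m]
    · filter_upwards [(hab m (not_lt.mp hm)).eventually
        (Metric.closedBall_mem_nhds _ (half_pos hε))] with n hn
      rw [Real.dist_eq] at hn
      simp only [d, if_neg hm]
      linarith [abs_sub_le (a n m) (b m) α]
  obtain ⟨N, hN⟩ := eventually_atTop.mp hterm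
  refine ⟨N, fun n hn => ?_⟩
  have hL0 : (0 : ℝ) < L := by exact_mod_cast le_of_max_le_right hL
  have havg : (∑ m ∈ Finset.range L, a n m) / L - α =
      (∑ m ∈ Finset.range L, (a n m - α)) / L := by
    rw [Finset.sum_sub_distrib, Finset.sum_const, Finset.card_range, nsmul_eq_mul]
    field_simp
  calc |(∑ m ∈ Finset.range L, a n m) / L - α|
      = |∑ m ∈ Finset.range L, (a n m - α)| / L := by rw [havg, abs_div, abs_of_pos hL0]
    _ ≤ (∑ m ∈ Finset.range L, (d m + ε / 2)) / L := by
      gcongr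
      exact (Finset.abs_sum_le_sum_abs _ _).trans (Finset.sum_le_sum (hN n hn))
    _ = (L : ℝ)⁻¹ * ∑ m ∈ Finset.range L, d m + ε / 2 := by
      rw [Finset.sum_add_distrib, Finset.sum_const, Finset.card_range, nsmul_eq_mul]
      field_simp
    _ ≤ ε := by linarith [hL₀ L (le_of_max_le_left hL)]

theorem stmt8_general {Ω : Type*} [MeasurableSpace Ω]
    (μ : Measure Ω) [IsProbabilityMeasure μ] (T : Ω → Ω)
    (hT : MeasurePreserving T μ μ)
    (U : ℕ → Set Ω) (hUmeas : ∀ n, MeasurableSet (U n))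
    (hpos : ∀ n, 0 < μ (U n))
    (hatαL : ℕ → ℕ → ℝ) (hatα : ℕ → ℝ) (L₁ : ℕ)
    (hlimL : ∀ L ≥ L₁, ∀ ℓ ≥ 1,
      Tendsto (fun n => condProb μ (U n) {x | tauIter T (U n) (ℓ - 1) x ≤ (L : ℕ∞)})
        atTop (𝓝 (hatαL ℓ L)))
    (hlim : ∀ ℓ ≥ 1, Tendsto (fun L => hatαL ℓ L) atTop (𝓝 (hatα ℓ))) :
    ∀ ε > (0 : ℝ), ∃ L₀ : ℕ, ∀ L ≥ L₀, ∃ N : ℕ, ∀ n ≥ N,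
      |(μ {x | tauIter T (U n) 1 x ≤ (L : ℕ∞)}).toReal / ((L : ℝ) * (μ (U n)).toReal) -
        (1 - hatα 2)| ≤ ε := by
  intro ε hε
  obtain ⟨L₀, hL₀⟩ := exists_abs_average_sub_le_of_tendsto
    (a := fun n m => condProb μ (U n) {x | tauIter T (U n) 1 x ≤ m})
    (fun n m => abs_condProb_le_one μ _ _) (fun m hm => hlimL m hm 2 one_le_two)
    (hlim 2 one_le_two) hε
  refine ⟨max L₀ 1, fun L hL => ?_⟩
  obtain ⟨N, hN⟩ := hL₀ L (le_of_max_le_left hL)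
  refine ⟨N, fun n hn => ?_⟩
  rw [← measureReal_def, ← measureReal_def, measureReal_tauIter_one_le_coe_div hT (hUmeas n)
    (hpos n).ne' (by omega), sub_sub_sub_cancel_left, abs_sub_comm]
  exact hN n hn

theorem stmt8 {Ω : Type*} [MeasurableSpace Ω]
    (μ : Measure Ω) [IsProbabilityMeasure μ] (T : Ω → Ω)
    (hT : MeasurePreserving T μ μ)
    (U : ℕ → Set Ω) (hUmeas : ∀ n, MeasurableSet (U n))
    (hnest : ∀ n, U (n + 1) ⊆ U n)
    (hpos : ∀ n, 0 < μ (U n))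
    (hto0 : Tendsto (fun n => μ (U n)) atTop (𝓝 0))
    (hatαL : ℕ → ℕ → ℝ) (hatα : ℕ → ℝ) (L₁ : ℕ)
    (hlimL : ∀ L ≥ L₁, ∀ ℓ ≥ 1,
      Tendsto (fun n => condProb μ (U n) {x | tauIter T (U n) (ℓ - 1) x ≤ (L : ℕ∞)})
        atTop (𝓝 (hatαL ℓ L)))
    (hlim : ∀ ℓ ≥ 1, Tendsto (fun L => hatαL ℓ L) atTop (𝓝 (hatα ℓ)))
    (hdecay : Tendsto hatα atTop (𝓝 0)) :
    ∀ ε > (0 : ℝ), ∃ L₀ : ℕ, ∀ L ≥ L₀, ∃ N : ℕ, ∀ n ≥ N,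
      |(μ {x | tauIter T (U n) 1 x ≤ (L : ℕ∞)}).toReal / ((L : ℝ) * (μ (U n)).toReal) -
        (1 - hatα 2)| ≤ ε :=
  stmt8_general μ T hT U hUmeas hpos hatαL hatα L₁ hlimL hlim
end
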